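/- arXiv:2311.16609 — 2 statements merged into one kernel-verified Lean document; each statement's English description precedes it below -/
import Mathlib

section
/- Let M be the shift operator on complex-valued sequences indexed by the integers. Let x_1, …, x_n be pairwise distinct nonzero complex numbers, w_1, …, w_n nonzero complex numbers, and u = Σ_{k=1}^{n} w_k g(x_k). If complex numbers p_0, p_1, …, p_n satisfy Σ_{t=0}^{n} p_t M^t u = 0, then the polynomial p(X) = p_0 + p_1 X + … + p_n X^n vanishes at every x_k, i.e., p(x_k) = 0 for all k = 1, …, n. -/
noncomputable def shiftOp : (ℤ → ℂ) →ₗ[ℂ] (ℤ → ℂ) where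
  toFun v := fun j => v (j + 1)
  map_add' _ _ := rfl
  map_smul' _ _ := rfl

lemma shiftOp_pow (t : ℕ) (u : ℤ → ℂ) (j : ℤ) : (shiftOp ^ t) u j = u (j + t) := by
  induction t generalizing u j with
  | zero => simp
  | succ t ih =>
    rw [pow_succ, Module.End.mul_apply]
    show (shiftOp ^ t) (shiftOp u) j = _
    rw [ih]
    show u (j + t + 1) = _
    congr 1
    push_cast
    ring

/-- Let `x 1, …, x n` be pairwise distinct nonzero complex numbers, the weights
`w k` nonzero, and `u = ∑ k, w k • g (x k)` with `g x : j ↦ x ^ j`.  If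
`∑_{t=0}^{n} p_t M ^ t u = 0`, then the polynomial `p₀ + p₁ X + ⋯ + pₙ Xⁿ`
vanishes at every `x k`. -/
theorem prony_roots (n : ℕ) (x : Fin n → ℂ) (hx : ∀ k, x k ≠ 0)
    (hdist : Function.Injective x)
    (w : Fin n → ℂ) (hw : ∀ k, w k ≠ 0) (u : ℤ → ℂ)
    (hu : u = ∑ k, w k • (fun j : ℤ => (x k) ^ j))
    (p : Fin (n + 1) → ℂ)
    (hp : ∑ t : Fin (n + 1), p t • (shiftOp ^ (t : ℕ)) u = 0) :
    ∀ k, ∑ t : Fin (n + 1), p t * (x k) ^ (t : ℕ) = 0 := by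
  set c : Fin n → ℂ := fun k => w k * ∑ t : Fin (n + 1), p t * (x k) ^ (t : ℕ) with hc
  have key : ∀ j : ℤ, ∑ k, c k * (x k) ^ j = 0 := by
    intro j
    have h0 := congrFun hp j
    simp only [Finset.sum_apply, Pi.smul_apply, Pi.zero_apply, smul_eq_mul] at h0
    calc ∑ k, c k * (x k) ^ j
        = ∑ k, ∑ t : Fin (n + 1), p t * (w k * ((x k) ^ j * (x k) ^ (t : ℕ))) := by
          apply Finset.sum_congr rfl
          intro k _
          rw [hc]
          simp only [Finset.mul_sum]
          rw [Finset.sum_mul]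
          apply Finset.sum_congr rfl
          intro t _
          ring
      _ = ∑ t : Fin (n + 1), ∑ k, p t * (w k * ((x k) ^ j * (x k) ^ (t : ℕ))) :=
          Finset.sum_comm
      _ = ∑ t : Fin (n + 1), p t * (shiftOp ^ (t : ℕ)) u j := by
          apply Finset.sum_congr rfl
          intro t _
          rw [shiftOp_pow, hu]
          simp only [Finset.sum_apply, Pi.smul_apply, smul_eq_mul, Finset.mul_sum]
          apply Finset.sum_congr rfl
          intro k _
          rw [zpow_add₀ (hx k), zpow_natCast]
      _ = 0 := h0
  have hm : (Matrix.vandermonde x).transpose.mulVec c = 0 := by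
    funext j
    simp only [Matrix.mulVec, dotProduct, Matrix.transpose_apply,
      Matrix.vandermonde, Matrix.of_apply, Pi.zero_apply]
    have hk := key (j : ℤ)
    rw [← hk]
    apply Finset.sum_congr rfl
    intro k _
    rw [zpow_natCast]
    ring
  have hdet : (Matrix.vandermonde x).transpose.det ≠ 0 := by
    rw [Matrix.det_transpose, Matrix.det_vandermonde]
    exact Finset.prod_ne_zero_iff.2 fun i _ => Finset.prod_ne_zero_iff.2 fun j hj => by
      rw [Finset.mem_Ioi] at hj
      exact sub_ne_zero.2 fun h => absurd (hdist h.symm) (Fin.ne_of_lt hj)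
  have hcz : c = 0 := by
    have hinj := Matrix.mulVec_injective_iff_isUnit.2 ((Matrix.isUnit_iff_isUnit_det _).2
      (isUnit_iff_ne_zero.2 hdet))
    exact hinj (by rw [hm, Matrix.mulVec_zero])
  intro k
  have hk := congrFun hcz k
  simp only [hc, Pi.zero_apply, mul_eq_zero] at hk
  exact hk.resolve_left (hw k)
end

section
/- Let M be an N × N complex matrix, x_1, …, x_n pairwise distinct complex numbers, and g_1, …, g_n linearly independent vectors in ℂ^N with M g_k = x_k g_k for each k. Let w_1, …, w_n be nonzero complex numbers, u = Σ_{k=1}^{n} w_k g_k, and ℓ a natural number with ℓ + 1 ≥ n. Then the N × (ℓ+1) matrix A whose t-th column is M^t u (for t = 0, …, ℓ) has rank exactly n. -/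
open Matrix

/-- Let the `x k` be pairwise distinct, the `g k` linearly independent
eigenvectors with `M g_k = x_k • g_k`, the weights `w k` nonzero,
`u = ∑ k, w k • g k`, and `ℓ + 1 ≥ n`.  Then the `N × (ℓ+1)` matrix whose
`t`-th column is `M^t u` has rank exactly `n`. -/
theorem measurement_matrix_rank (N n ℓ : ℕ) (hℓ : ℓ + 1 ≥ n)
    (M : Matrix (Fin N) (Fin N) ℂ)
    (x : Fin n → ℂ) (hdist : Function.Injective x)
    (g : Fin n → (Fin N → ℂ)) (hind : LinearIndependent ℂ g)
    (hg : ∀ k, M.mulVec (g k) = x k • g k)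
    (w : Fin n → ℂ) (hw : ∀ k, w k ≠ 0)
    (u : Fin N → ℂ) (hu : u = ∑ k, w k • g k)
    (A : Matrix (Fin N) (Fin (ℓ + 1)) ℂ)
    (hA : A = Matrix.of fun (i : Fin N) (t : Fin (ℓ + 1)) =>
      (M ^ (t : ℕ)).mulVec u i) :
    A.rank = n := by
  classical
  -- eigenvector powers
  have hgt : ∀ (t : ℕ) (k : Fin n), (M ^ t).mulVec (g k) = (x k ^ t) • g k := by
    intro t k
    induction t with
    | zero => simp
    | succ t ih =>
      rw [pow_succ', ← mulVec_mulVec, ih, mulVec_smul, hg, smul_smul, pow_succ',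
        mul_comm (x k)]
  -- M^t u as a combination of the g k
  have hut : ∀ t : ℕ, (M ^ t).mulVec u = ∑ k, (w k * x k ^ t) • g k := by
    intro t
    rw [hu]
    have : (M ^ t).mulVec (∑ k, w k • g k) = ∑ k, w k • (M ^ t).mulVec (g k) := by
      show (M ^ t).mulVecLin (∑ k, w k • g k) = _
      rw [map_sum]
      exact Finset.sum_congr rfl fun k _ => (M ^ t).mulVecLin.map_smul _ _
    rw [this]
    refine Finset.sum_congr rfl fun k _ => ?_
    rw [hgt t k, smul_smul]
  set G : Matrix (Fin N) (Fin n) ℂ := Matrix.of fun i k => g k i with hG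
  set V : Matrix (Fin n) (Fin (ℓ + 1)) ℂ :=
    Matrix.of fun k t => w k * x k ^ (t : ℕ) with hV
  have hAGV : A = G * V := by
    ext i t
    rw [hA, mul_apply]
    simp only [Matrix.of_apply, hut (t : ℕ), Finset.sum_apply, Pi.smul_apply, smul_eq_mul,
      hG, hV]
    exact Finset.sum_congr rfl fun k _ => by ring
  -- G's linear map is injective
  have hGinj : Function.Injective G.mulVecLin := by
    rw [← LinearMap.ker_eq_bot, LinearMap.ker_eq_bot']
    intro c hc
    have hGc : G.mulVec c = ∑ k, c k • g k := by
      ext i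
      simp [mulVec, dotProduct, hG, Finset.sum_apply, mul_comm]
    have : (∑ k, c k • g k) = 0 := by rw [← hGc]; exact hc
    exact funext fun k => Fintype.linearIndependent_iff.mp hind c this k
  -- rank A = rank V
  have h1 : A.rank = V.rank := by
    rw [hAGV, Matrix.rank, Matrix.rank, mulVecLin_mul, LinearMap.range_comp]
    exact (LinearEquiv.finrank_eq
      (Submodule.equivMapOfInjective G.mulVecLin hGinj _)).symm
  -- rank V ≤ n
  have h2 : V.rank ≤ n := by
    simpa using V.rank_le_card_height
  -- the square Vandermonde-type submatrix
  set E : Matrix (Fin (ℓ + 1)) (Fin n) ℂ :=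
    Matrix.of fun t j => if t = (⟨(j : ℕ), lt_of_lt_of_le j.2 hℓ⟩ : Fin (ℓ + 1)) then 1 else 0
    with hE
  have hVE : V * E = Matrix.diagonal w * Matrix.vandermonde x := by
    ext k j
    rw [mul_apply]
    simp only [hE, Matrix.of_apply, mul_ite, mul_one, mul_zero]
    rw [Finset.sum_ite_eq' Finset.univ (⟨(j : ℕ), lt_of_lt_of_le j.2 hℓ⟩ : Fin (ℓ + 1))]
    simp [hV, Matrix.mul_apply, Matrix.diagonal, Matrix.vandermonde]
  have hdet : IsUnit (V * E).det := by
    rw [hVE, det_mul, det_diagonal, det_vandermonde]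
    refine (IsUnit.mul ?_ ?_)
    · exact isUnit_iff_ne_zero.mpr (Finset.prod_ne_zero_iff.mpr fun k _ => hw k)
    · refine isUnit_iff_ne_zero.mpr (Finset.prod_ne_zero_iff.mpr fun i _ => ?_)
      refine Finset.prod_ne_zero_iff.mpr fun j hj => sub_ne_zero.mpr fun h => ?_
      exact (Finset.mem_Ioi.mp hj).ne' (hdist h)
  have h3 : (n : ℕ) ≤ V.rank := by
    have := Matrix.rank_mul_le_left V E
    have hr : (V * E).rank = n := by
      rw [Matrix.rank_of_isUnit _ ((Matrix.isUnit_iff_isUnit_det _).mpr hdet), Fintype.card_fin]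
    omega
  omega
end
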